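/- Characterization of simplified organizations in terms of the array: let a be a list of length L ≥ 1 of positive integers. Every internal (non-leaf) node of the canonical decoded forest decode(a) has at least two children if and only if, for every integer l with 1 ≤ l < max(a), every maximal nonempty block of consecutive entries of a that are all strictly greater than l contains at least one entry equal to l+1. -/

import Mathlib

/-- A rooted plane tree: a node carrying a finite ordered list of child subtrees.
A node with no children is a leaf. -/
inductive PTree : Type where
  | node : List PTree → PTree

namespace PTree

mutual
/-- Number of leaves of a plane tree. -/
def leaves : PTree → ℕ
  | .node [] => 1
  | .node (c :: cs) => c.leaves + leavesList cs

/-- Total number of leaves of a list of plane trees. -/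
def leavesList : List PTree → ℕ
  | [] => 0
  | c :: cs => c.leaves + leavesList cs
end

mutual
/-- Height of a plane tree (a single leaf has height 1). -/
def height : PTree → ℕ
  | .node [] => 1
  | .node (c :: cs) => 1 + max c.height (heightList cs)

/-- Maximum height among a list of plane trees (0 for the empty list). -/
def heightList : List PTree → ℕ
  | [] => 0
  | c :: cs => max c.height (heightList cs)
end

mutual
/-- Separation levels between consecutive leaves inside a tree whose root is at level `l`:
between two consecutive leaves lying in distinct children we record `l+1`
(one more than the level of their lowest common ancestor, which is the root). -/
def enc : PTree → ℕ → List ℕ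
  | .node [], _ => []
  | .node (c :: cs), l => c.enc (l + 1) ++ encList cs (l + 1)

/-- Separation levels for a list of sibling subtrees all at level `l`, including
the separator `l` between consecutive subtrees. -/
def encList : List PTree → ℕ → List ℕ
  | [], _ => []
  | c :: cs, l => (l :: c.enc l) ++ encList cs l
end

end PTree

/-- Total number of leaves of a plane forest. -/
def forestLeaves (F : List PTree) : ℕ := PTree.leavesList F

/-- Height of a plane forest: the maximum level of any of its nodes (roots are at level 1). -/
def forestHeight (F : List PTree) : ℕ := PTree.heightList F

/-- The separation array of a plane forest: for each pair of consecutive leaves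
(numbered left to right), the level at which they separate (`1` if they lie in
different trees, and `1 +` the level of their lowest common ancestor otherwise). -/
def forestSep : List PTree → List ℕ
  | [] => []
  | t :: ts => t.enc 1 ++ PTree.encList ts 1

/-- Maximum entry of a list of naturals (`0` for the empty list). -/
def listMax (a : List ℕ) : ℕ := a.foldr max 0

/-- Split a list at the positions of entries equal to `v`, producing the list of the
(possibly empty) segments delimited by those entries; a list containing `k` occurrences
of `v` yields `k + 1` segments, in left-to-right order. -/
def splitSep (v : ℕ) : List ℕ → List (List ℕ)
  | [] => [[]]
  | x :: xs =>
    match splitSep v xs with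
    | [] => [[]]
    | r :: rs => if x = v then [] :: r :: rs else (x :: r) :: rs

theorem splitSep_ne_nil (v : ℕ) (s : List ℕ) : splitSep v s ≠ [] := by
  cases s with
  | nil => simp [splitSep]
  | cons x xs =>
    simp only [splitSep]
    cases h : splitSep v xs with
    | nil => simp
    | cons r rs => by_cases hxv : x = v <;> simp [hxv]

theorem listMax_le_of_mem_splitSep {v : ℕ} {s s' : List ℕ} (h : s' ∈ splitSep v s) :
    listMax s' ≤ listMax s := by
  induction s generalizing s' with
  | nil =>
    simp only [splitSep, List.mem_singleton] at h
    subst h; exact le_rfl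
  | cons x xs ih =>
    simp only [splitSep] at h
    cases hs : splitSep v xs with
    | nil => exact absurd hs (splitSep_ne_nil v xs)
    | cons r rs =>
      rw [hs] at h
      have hr : r ∈ splitSep v xs := by rw [hs]; exact List.mem_cons_self
      by_cases hxv : x = v
      · simp only [if_pos hxv, List.mem_cons] at h
        rcases h with h | h | h
        · subst h; simp [listMax]
        · subst h
          exact le_trans (ih hr) (by simp [listMax, le_max_iff, le_refl, or_true])
        · have : s' ∈ splitSep v xs := by rw [hs]; exact List.mem_cons_of_mem _ h
          exact le_trans (ih this) (by simp [listMax, le_max_iff, le_refl, or_true])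
      · simp only [if_neg hxv, List.mem_cons] at h
        rcases h with h | h
        · subst h
          have := ih hr
          simp only [listMax, List.foldr] at *
          omega
        · have : s' ∈ splitSep v xs := by rw [hs]; exact List.mem_cons_of_mem _ h
          have := ih this
          simp only [listMax, List.foldr] at *
          omega

/-- The canonical decoding `T(s, l)` of a list `s` (all of whose entries are intended to
be strictly greater than `l`) into a plane tree rooted at level `l`: the empty list
decodes to a single leaf, and otherwise the children are obtained by decoding, at level
`l + 1`, the segments of `s` delimited by the entries equal to `l + 1`. -/
def decodeT (s : List ℕ) (l : ℕ) : PTree :=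
  if h : s = [] ∨ listMax s ≤ l then .node []
  else .node ((splitSep (l + 1) s).attach.map (fun x => decodeT x.1 (l + 1)))
termination_by listMax s + 1 - l
decreasing_by
  have h1 : listMax x.1 ≤ listMax s := listMax_le_of_mem_splitSep x.2
  push_neg at h
  omega

/-- The canonical decoded forest of a list `a`: decode, as trees rooted at level `1`,
the segments of `a` delimited by the entries equal to `1`. -/
def decode (a : List ℕ) : List PTree := (splitSep 1 a).map (fun s => decodeT s 1)

mutual
/-- A plane tree is *simplified* if every internal (non-leaf) node has at least two
children. -/
def PTree.Simplified : PTree → Prop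
  | .node [] => True
  | .node (c :: cs) => cs ≠ [] ∧ c.Simplified ∧ SimplifiedList cs

/-- Every tree in the list is simplified. -/
def SimplifiedList : List PTree → Prop
  | [] => True
  | c :: cs => c.Simplified ∧ SimplifiedList cs
end

/-- A plane forest is *simplified* if every internal (non-leaf) node of every one of its
trees has at least two children. -/
def forestSimplified (F : List PTree) : Prop := SimplifiedList F

/-- The block condition on a list `a`: for every level `l` with `1 ≤ l < max(a)`, every
maximal nonempty block of consecutive entries of `a` that are all strictly greater than
`l` (i.e. a nonempty contiguous segment `b` of `a` with all entries `> l`, whose left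
neighbour, if any, is `≤ l` and whose right neighbour, if any, is `≤ l`) contains at
least one entry equal to `l + 1`. -/
def BlockCond (a : List ℕ) : Prop :=
  ∀ l, 1 ≤ l → l < listMax a →
    ∀ u b v : List ℕ, a = u ++ b ++ v → b ≠ [] → (∀ x ∈ b, l < x) →
      (∀ y, u.getLast? = some y → y ≤ l) → (∀ y, v.head? = some y → y ≤ l) →
      (l + 1) ∈ b

/-!
If every entry of `s` exceeds `l`, the root of `decodeT s l` has one child per segment of `s`
split at `l + 1`, so it has at least two children exactly when `l + 1 ∈ s`; and `s` itself is
the only maximal block of `s` above `l`. A separator `v ≤ m` never lies inside a block above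
`m`, so the maximal blocks above `m` of a list are exactly those of its segments split at `v`.
Induction on the level then identifies simplicity of `decodeT s l` with the block condition
of `s` at all levels `≥ l`, which is `BlockCondFrom l s`.
-/

namespace List

variable {α : Type*}

theorem induction_on_sep (v : α) {motive : List α → Prop}
    (not_mem : ∀ s, v ∉ s → motive s)
    (append_cons : ∀ p q, motive p → motive q → motive (p ++ v :: q)) (s : List α) :
    motive s := by
  by_cases h : v ∈ s
  · obtain ⟨p, q, rfl⟩ := append_of_mem h
    exact append_cons p q (induction_on_sep v not_mem append_cons p)
      (induction_on_sep v not_mem append_cons q)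
  · exact not_mem s h
termination_by s.length

variable [BEq α] [LawfulBEq α]

theorem two_le_length_splitOn_iff (v : α) (s : List α) :
    2 ≤ (s.splitOn v).length ↔ v ∈ s := by
  by_cases h : v ∈ s
  · obtain ⟨p, q, rfl⟩ := append_of_mem h
    have hp := length_pos_iff.mpr (splitOn_ne_nil v p)
    have hq := length_pos_iff.mpr (splitOn_ne_nil v q)
    simp only [splitOn_append_cons_self, length_append, h, iff_true]
    omega
  · simp [splitOn_eq_singleton h, h]

theorem mem_and_ne_of_mem_splitOn {v x : α} {s t : List α} (ht : t ∈ s.splitOn v) (hx : x ∈ t) :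
    x ∈ s ∧ x ≠ v := by
  induction s using induction_on_sep v generalizing t with
  | not_mem s hs =>
    rw [splitOn_eq_singleton hs, mem_singleton] at ht
    subst ht
    exact ⟨hx, fun h => hs (h ▸ hx)⟩
  | append_cons p q ihp ihq =>
    rw [splitOn_append_cons_self, mem_append] at ht
    rcases ht with ht | ht
    · exact ⟨by simp [(ihp ht hx).1], (ihp ht hx).2⟩
    · exact ⟨by simp [(ihq ht hx).1], (ihq ht hx).2⟩

end List

theorem splitSep_eq_splitOn (v : ℕ) (s : List ℕ) : splitSep v s = s.splitOn v := by
  induction s with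
  | nil => rfl
  | cons x xs ih =>
    obtain ⟨r, rs, h⟩ := List.exists_cons_of_ne_nil (List.splitOn_ne_nil v xs)
    rw [List.splitOn_cons_eq_if_modifyHead, splitSep, ih, h]
    by_cases hx : x = v <;> simp [hx]

theorem le_listMax_of_mem {x : ℕ} {a : List ℕ} (h : x ∈ a) : x ≤ listMax a := by
  induction a with
  | nil => simp at h
  | cons y ys ih =>
    rcases List.mem_cons.mp h with rfl | h
    · simp [listMax]
    · exact (ih h).trans (by simp [listMax])

def IsMaxBlock (m : ℕ) (a b : List ℕ) : Prop :=
  ∃ u v, a = u ++ b ++ v ∧ b ≠ [] ∧ (∀ x ∈ b, m < x) ∧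
    (∀ y, u.getLast? = some y → y ≤ m) ∧ (∀ y, v.head? = some y → y ≤ m)

def BlockCondFrom (l : ℕ) (a : List ℕ) : Prop :=
  ∀ m, l ≤ m → ∀ b, IsMaxBlock m a b → m + 1 ∈ b

theorem blockCond_iff_blockCondFrom_one (a : List ℕ) : BlockCond a ↔ BlockCondFrom 1 a := by
  constructor
  · rintro h m hm b ⟨u, v, rfl, hb, hgt, hu, hv⟩
    obtain ⟨x, hx⟩ := List.exists_mem_of_ne_nil b hb
    exact h m hm ((hgt x hx).trans_le (le_listMax_of_mem (by simp [hx]))) u b v rfl hb hgt hu hv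
  · intro h m hm _ u b v ha hb hgt hu hv
    exact h m hm b ⟨u, v, ha, hb, hgt, hu, hv⟩

theorem isMaxBlock_iff_of_forall_lt {m : ℕ} {s : List ℕ} (hs : ∀ x ∈ s, m < x) (b : List ℕ) :
    IsMaxBlock m s b ↔ b = s ∧ s ≠ [] := by
  constructor
  · rintro ⟨u, v, rfl, hb, -, hu, hv⟩
    have hu₀ : u = [] := by
      cases h : u.getLast? with
      | none => exact List.getLast?_eq_none_iff.mp h
      | some y => exact absurd (hu y h) (hs y (by simp [List.mem_of_getLast? h])).not_ge
    have hv₀ : v = [] := by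
      cases h : v.head? with
      | none => exact List.head?_eq_none_iff.mp h
      | some y => exact absurd (hv y h) (hs y (by simp [List.mem_of_mem_head? h])).not_ge
    simp [hu₀, hv₀, hb]
  · rintro ⟨rfl, hb⟩
    exact ⟨[], [], by simp, hb, hs, by simp, by simp⟩

theorem isMaxBlock_append_cons {m c : ℕ} (hc : c ≤ m) (p q b : List ℕ) :
    IsMaxBlock m (p ++ c :: q) b ↔ IsMaxBlock m p b ∨ IsMaxBlock m q b := by
  constructor
  · rintro ⟨u, v, he, hb, hgt, hu, hv⟩
    have hcb : c ∉ b := fun h => (hgt c h).not_ge hc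
    rcases List.append_eq_append_iff.mp he.symm with ⟨w, rfl, rfl⟩ | ⟨_ | ⟨d, w⟩, he', hq⟩
    · refine Or.inl ⟨u, w, rfl, hb, hgt, hu, fun y hy => hv y (by simp [List.head?_append, hy])⟩
    · simp only [List.append_nil, List.nil_append] at he' hq
      subst he' hq
      exact Or.inl ⟨u, [], by simp, hb, hgt, hu, by simp⟩
    · simp only [List.cons_append, List.cons.injEq] at hq
      obtain ⟨rfl, rfl⟩ := hq
      rcases List.append_eq_append_iff.mp he' with ⟨w', rfl, rfl⟩ | ⟨_ | ⟨e, w'⟩, rfl, hb'⟩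
      · simp at hcb
      · simp only [List.nil_append] at hb'
        simp [← hb'] at hcb
      · simp only [List.cons_append, List.cons.injEq] at hb'
        obtain ⟨rfl, rfl⟩ := hb'
        exact Or.inr ⟨w', v, by simp, hb, hgt,
          fun y hy => hu y (by simp [List.getLast?_append, List.getLast?_cons, hy]), hv⟩
  · rintro (⟨u, v, rfl, hb, hgt, hu, hv⟩ | ⟨u, v, rfl, hb, hgt, hu, hv⟩)
    · refine ⟨u, v ++ c :: q, by simp, hb, hgt, hu, fun y hy => ?_⟩
      cases v with
      | nil =>
        simp only [List.nil_append, List.head?_cons, Option.some.injEq] at hy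
        omega
      | cons w ws => exact hv y (by simpa using hy)
    · refine ⟨p ++ c :: u, v, by simp, hb, hgt, fun y hy => ?_, hv⟩
      cases h : u.getLast? with
      | none =>
        simp only [List.getLast?_append, List.getLast?_cons, h, Option.getD_none,
          Option.some_or, Option.some.injEq] at hy
        omega
      | some z =>
        simp only [List.getLast?_append, List.getLast?_cons, h, Option.getD_some,
          Option.some_or, Option.some.injEq] at hy
        exact hy ▸ hu z h

theorem isMaxBlock_iff_exists_splitOn {m v : ℕ} (hv : v ≤ m) (s b : List ℕ) :
    IsMaxBlock m s b ↔ ∃ t ∈ s.splitOn v, IsMaxBlock m t b := by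
  induction s using List.induction_on_sep v with
  | not_mem s hs => simp [List.splitOn_eq_singleton hs]
  | append_cons p q ihp ihq =>
    rw [List.splitOn_append_cons_self, isMaxBlock_append_cons hv, ihp, ihq]
    simp only [List.mem_append, or_and_right, exists_or]

theorem blockCondFrom_iff_forall_splitOn {l v : ℕ} (hv : v ≤ l) (s : List ℕ) :
    BlockCondFrom l s ↔ ∀ t ∈ s.splitOn v, BlockCondFrom l t := by
  constructor
  · intro h t ht m hm b hb
    exact h m hm b ((isMaxBlock_iff_exists_splitOn (hv.trans hm) s b).mpr ⟨t, ht, hb⟩)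
  · intro h m hm b hb
    obtain ⟨t, ht, hb⟩ := (isMaxBlock_iff_exists_splitOn (hv.trans hm) s b).mp hb
    exact h t ht m hm b hb

theorem blockCondFrom_iff_of_forall_lt {l : ℕ} {s : List ℕ} (hs : ∀ x ∈ s, l < x) (hne : s ≠ []) :
    BlockCondFrom l s ↔ l + 1 ∈ s ∧ ∀ t ∈ s.splitOn (l + 1), BlockCondFrom (l + 1) t := by
  rw [← blockCondFrom_iff_forall_splitOn le_rfl]
  constructor
  · intro h
    exact ⟨h l le_rfl s ((isMaxBlock_iff_of_forall_lt hs s).mpr ⟨rfl, hne⟩),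
      fun m hm => h m (by omega)⟩
  · rintro ⟨hmem, h⟩ m hm b hb
    rcases hm.eq_or_lt with rfl | hm
    · obtain ⟨rfl, -⟩ := (isMaxBlock_iff_of_forall_lt hs b).mp hb
      exact hmem
    · exact h m hm b hb

theorem simplifiedList_iff (L : List PTree) : SimplifiedList L ↔ ∀ c ∈ L, c.Simplified := by
  induction L with
  | nil => simp [SimplifiedList]
  | cons c cs ih => simp [SimplifiedList, ih]

theorem simplified_node_iff {cs : List PTree} (hcs : cs ≠ []) :
    (PTree.node cs).Simplified ↔ 2 ≤ cs.length ∧ ∀ c ∈ cs, c.Simplified := by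
  obtain ⟨c, _ | ⟨d, cs⟩, rfl⟩ := List.exists_cons_of_ne_nil hcs <;>
    simp [PTree.Simplified, simplifiedList_iff]

theorem simplified_decodeT_iff {l : ℕ} {s : List ℕ} (hs : ∀ x ∈ s, l < x) :
    (decodeT s l).Simplified ↔ BlockCondFrom l s := by
  rcases eq_or_ne s [] with rfl | hne
  · rw [decodeT, dif_pos (Or.inl rfl)]
    simp only [PTree.Simplified, true_iff]
    intro m _ b hb
    exact (((isMaxBlock_iff_of_forall_lt (by simp) b).mp hb).2 rfl).elim
  · have hmax : ¬(s = [] ∨ listMax s ≤ l) := by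
      obtain ⟨x, hx⟩ := List.exists_mem_of_ne_nil s hne
      simpa [hne] using (hs x hx).trans_le (le_listMax_of_mem hx)
    have hseg : ∀ t ∈ s.splitOn (l + 1), ∀ x ∈ t, l + 1 < x := fun t ht x hx => by
      obtain ⟨hxs, hxl⟩ := List.mem_and_ne_of_mem_splitOn ht hx
      have := hs x hxs
      omega
    rw [decodeT, dif_neg hmax, simplified_node_iff (by simp [splitSep_ne_nil]),
      blockCondFrom_iff_of_forall_lt hs hne]
    simp only [List.length_map, List.length_attach, List.forall_mem_map, List.mem_attach,
      forall_const, Subtype.forall]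
    rw [splitSep_eq_splitOn, List.two_le_length_splitOn_iff]
    exact and_congr_right fun _ => forall₂_congr fun t ht => simplified_decodeT_iff (hseg t ht)
termination_by listMax s + 1 - l
decreasing_by
  have := listMax_le_of_mem_splitSep (splitSep_eq_splitOn (l + 1) s ▸ ht)
  omega

/-- characterization of simplified organizations in terms of the
array. Let `a` be a list of length `L ≥ 1` of positive integers. Every internal
(non-leaf) node of the canonical decoded forest `decode a` has at least two children if
and only if, for every integer `l` with `1 ≤ l < max(a)`, every maximal nonempty block
of consecutive entries of `a` that are all strictly greater than `l` contains at least
one entry equal to `l + 1`. -/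
theorem decode_simplified_iff_blockCond (a : List ℕ) (hlen : 1 ≤ a.length)
    (hpos : ∀ x ∈ a, 1 ≤ x) :
    forestSimplified (decode a) ↔ BlockCond a := by
  have hseg : ∀ s ∈ a.splitOn 1, ∀ x ∈ s, 1 < x := fun s hs x hx => by
    obtain ⟨hxa, hx1⟩ := List.mem_and_ne_of_mem_splitOn hs hx
    have := hpos x hxa
    omega
  rw [blockCond_iff_blockCondFrom_one, blockCondFrom_iff_forall_splitOn le_rfl, forestSimplified,
    decode, simplifiedList_iff, List.forall_mem_map, splitSep_eq_splitOn]
  exact forall₂_congr fun s hs => simplified_decodeT_iff (hseg s hs)
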